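/- Let u ∈ ℝ^n_{>0} with ‖u‖₂ ≤ 1, let h ∈ ℝⁿ, let μ = μ_{uuᵀ,h} be the rank-one Ising model on {−1,1}ⁿ, and fix i ∈ [n]. Set α_i = 1 − ‖u‖₂² + u_i² (so α_i > 0). Then ∑_{j ≠ i} | ℙ_{x∼μ}[x_j = 1 | x_i = 1] − ℙ_{x∼μ}[x_j = 1 | x_i = −1] | · u_j ≤ (1/α_i) · u_i · (‖u‖₂² − u_i²). -/

import Mathlib

open Finset

/-- The ±1 spin vector associated to a Boolean configuration. -/
noncomputable def spin {n : ℕ} (x : Fin n → Bool) : Fin n → ℝ :=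
  fun i => if x i then 1 else -1

/-- The rank-one Ising model `μ_{uuᵀ,h}(x) ∝ exp(½⟨u,x⟩² + ⟨h,x⟩)` on `{−1,1}ⁿ`. -/
noncomputable def isingRk1 {n : ℕ} (u h : Fin n → ℝ) (x : Fin n → Bool) : ℝ :=
  Real.exp ((1 / 2) * (∑ i, u i * spin x i) ^ 2 + ∑ i, h i * spin x i) /
    ∑ y : Fin n → Bool, Real.exp ((1 / 2) * (∑ i, u i * spin y i) ^ 2 + ∑ i, h i * spin y i)

/-- The conditional probability `ℙ_{x∼μ}[x_j = 1 ∣ x_i = ε]` for the rank-one Ising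
model, where the spin value `1` corresponds to the Boolean `true`. -/
noncomputable def condProb {n : ℕ} (u h : Fin n → ℝ) (i j : Fin n) (ε : Bool) : ℝ :=
  (∑ x ∈ Finset.univ.filter (fun x : Fin n → Bool => x j = true ∧ x i = ε),
      isingRk1 u h x) /
    ∑ x ∈ Finset.univ.filter (fun x : Fin n → Bool => x i = ε), isingRk1 u h x

namespace StmtAux
open Real
variable {n : ℕ}

open Real

variable {n : ℕ}

/-- linear form -/
noncomputable def S (v : Fin n → ℝ) (y : Fin n → Bool) : ℝ := ∑ k, v k * spin y k

/-- Ising weight with interaction vector `v` and field `c`. -/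
noncomputable def W (v c : Fin n → ℝ) (y : Fin n → Bool) : ℝ :=
  Real.exp ((1/2) * (S v y)^2 + S c y)

lemma W_pos (v c : Fin n → ℝ) (y : Fin n → Bool) : 0 < W v c y := Real.exp_pos _

lemma Z_pos (v c : Fin n → ℝ) : 0 < ∑ y : Fin n → Bool, W v c y :=
  Finset.sum_pos (fun y _ => W_pos v c y) ⟨fun _ => true, mem_univ _⟩

lemma spin_inf_add_sup (x y : Fin n → Bool) (k : Fin n) :
    spin (x ⊓ y) k + spin (x ⊔ y) k = spin x k + spin y k := by
  have h1 : (x ⊓ y) k = (x k && y k) := rfl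
  have h2 : (x ⊔ y) k = (x k || y k) := rfl
  cases hx : x k <;> cases hy : y k <;> simp [spin, h1, h2, hx, hy] <;> ring

lemma spin_sup_sub_inf (x y : Fin n → Bool) (k : Fin n) :
    spin (x ⊔ y) k - spin (x ⊓ y) k = |spin x k - spin y k| := by
  have h1 : (x ⊓ y) k = (x k && y k) := rfl
  have h2 : (x ⊔ y) k = (x k || y k) := rfl
  cases hx : x k <;> cases hy : y k <;>
    simp [spin, h1, h2, hx, hy] <;> norm_num

lemma S_inf_add_sup (v : Fin n → ℝ) (x y : Fin n → Bool) :
    S v (x ⊓ y) + S v (x ⊔ y) = S v x + S v y := by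
  simp only [S, ← Finset.sum_add_distrib]
  refine Finset.sum_congr rfl fun k _ => ?_
  rw [← mul_add, ← mul_add, spin_inf_add_sup]

lemma S_sup_sub_le (v : Fin n → ℝ) (hv : ∀ k, 0 ≤ v k) (x y : Fin n → Bool) :
    |S v x - S v y| ≤ S v (x ⊔ y) - S v (x ⊓ y) := by
  have h : S v (x ⊔ y) - S v (x ⊓ y) = ∑ k, v k * |spin x k - spin y k| := by
    simp only [S, ← Finset.sum_sub_distrib]
    refine Finset.sum_congr rfl fun k _ => ?_
    rw [← mul_sub, spin_sup_sub_inf]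
  rw [h]
  have h2 : S v x - S v y = ∑ k, (v k * spin x k - v k * spin y k) := by
    simp [S, Finset.sum_sub_distrib]
  rw [h2]
  refine (Finset.abs_sum_le_sum_abs _ _).trans ?_
  refine Finset.sum_le_sum fun k _ => ?_
  rw [← mul_sub, abs_mul, abs_of_nonneg (hv k)]

lemma S_le_sup (v : Fin n → ℝ) (hv : ∀ k, 0 ≤ v k) (x y : Fin n → Bool) :
    S v y ≤ S v (x ⊔ y) := by
  refine Finset.sum_le_sum fun k _ => ?_
  have h2 : (x ⊔ y) k = (x k || y k) := rfl
  have : spin y k ≤ spin (x ⊔ y) k := by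
    cases hx : x k <;> cases hy : y k <;> simp [spin, h2, hx, hy] <;> norm_num
  nlinarith [this, hv k]

lemma S_smul_add (g v : Fin n → ℝ) (t : ℝ) (y : Fin n → Bool) :
    S (g + t • v) y = S g y + t * S v y := by
  simp only [S, Pi.add_apply, Pi.smul_apply, smul_eq_mul, add_mul, Finset.sum_add_distrib,
    Finset.mul_sum]
  ring_nf

/-- Generalized log-supermodularity across two field strengths `t ≤ t'`. -/
lemma supermod (v g : Fin n → ℝ) (hv : ∀ k, 0 ≤ v k) {t t' : ℝ} (ht : t ≤ t')
    (x y : Fin n → Bool) :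
    W v (g + t • v) x * W v (g + t' • v) y ≤
      W v (g + t • v) (x ⊓ y) * W v (g + t' • v) (x ⊔ y) := by
  simp only [W, ← Real.exp_add]
  apply Real.exp_le_exp.2
  simp only [S_smul_add]
  have e1 := S_inf_add_sup v x y
  have e2 := S_inf_add_sup g x y
  have e3 := S_sup_sub_le v hv x y
  have e4 := S_le_sup v hv x y
  rw [abs_le] at e3
  obtain ⟨e3a, e3b⟩ := e3
  have e5 : S v x - S v (x ⊓ y) = S v (x ⊔ y) - S v y := by linarith
  have h1 : 0 ≤ (t' - t) * (S v (x ⊔ y) - S v y) :=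
    mul_nonneg (by linarith) (by linarith)
  have h2 : (S v x - S v y)^2 ≤ (S v (x ⊔ y) - S v (x ⊓ y))^2 := by nlinarith
  have hq : 1/2 * (S v (x ⊓ y))^2 + 1/2 * (S v (x ⊔ y))^2
      - 1/2 * (S v x)^2 - 1/2 * (S v y)^2
      = ((S v (x ⊔ y) - S v (x ⊓ y))^2 - (S v x - S v y)^2)/4 := by
    linear_combination ((S v (x ⊓ y) + S v (x ⊔ y) + S v x + S v y)/4) * e1
  have h1' : t * (S v (x ⊓ y) - S v x) + t' * (S v (x ⊔ y) - S v y)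
      = (t' - t) * (S v (x ⊔ y) - S v y) := by linear_combination (-t) * e5
  linarith [h1, h2, hq, e2, h1']


variable {n : ℕ}

noncomputable def N (w f g : (Fin n → Bool) → ℝ) : ℝ :=
  (∑ y, f y * g y * w y) * (∑ y, w y) - (∑ y, f y * w y) * (∑ y, g y * w y)

lemma N_eq_double (w f g : (Fin n → Bool) → ℝ) :
    N w f g = (1/2) * ∑ y : Fin n → Bool, ∑ y' : Fin n → Bool,
      (w y * w y') * ((f y - f y') * (g y - g y')) := by
  have key : ∀ y y' : Fin n → Bool, (w y * w y') * ((f y - f y') * (g y - g y'))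
      = (f y * g y * w y) * w y' - (f y * w y) * (g y' * w y')
        - (f y' * w y') * (g y * w y) + w y * (f y' * g y' * w y') := by
    intros; ring
  simp_rw [key, Finset.sum_add_distrib, Finset.sum_sub_distrib, ← Finset.sum_mul,
    ← Finset.mul_sum, ← Finset.sum_mul]
  rw [N]
  ring

lemma N_self_nonneg (w : (Fin n → Bool) → ℝ) (hw : ∀ y, 0 ≤ w y)
    (f : (Fin n → Bool) → ℝ) : 0 ≤ N w f f := by
  rw [N_eq_double]
  have h2 : (0:ℝ) ≤ ∑ y : Fin n → Bool, ∑ y' : Fin n → Bool,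
      (w y * w y') * ((f y - f y') * (f y - f y')) :=
    Finset.sum_nonneg fun y _ => Finset.sum_nonneg fun y' _ =>
      mul_nonneg (mul_nonneg (hw y) (hw y')) (mul_self_nonneg _)
  linarith

lemma N_le_of_pointwise (w F X : (Fin n → Bool) → ℝ) (L : ℝ) (hw : ∀ y, 0 ≤ w y)
    (hP : ∀ y y', (F y - F y') * (X y - X y') ≤ L * ((X y - X y') * (X y - X y'))) :
    N w F X ≤ L * N w X X := by
  rw [N_eq_double, N_eq_double]
  have hL : L * (1/2 * ∑ y : Fin n → Bool, ∑ y' : Fin n → Bool,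
      (w y * w y') * ((X y - X y') * (X y - X y')))
      = 1/2 * ∑ y : Fin n → Bool, ∑ y' : Fin n → Bool,
      (w y * w y') * (L * ((X y - X y') * (X y - X y'))) := by
    simp_rw [Finset.mul_sum]
    refine Finset.sum_congr rfl fun y _ => ?_
    refine Finset.sum_congr rfl fun y' _ => by ring
  rw [hL]
  refine mul_le_mul_of_nonneg_left ?_ (by norm_num)
  exact Finset.sum_le_sum fun y _ => Finset.sum_le_sum fun y' _ =>
    mul_le_mul_of_nonneg_left (hP y y') (mul_nonneg (hw y) (hw y'))

lemma N_sub_smul (w f X Y : (Fin n → Bool) → ℝ) (a : ℝ) :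
    N w f (fun y => X y - a * Y y) = N w f X - a * N w f Y := by
  simp only [N]
  have h1 : ∑ y, f y * (X y - a * Y y) * w y
      = (∑ y, f y * X y * w y) - a * ∑ y, f y * Y y * w y := by
    rw [Finset.mul_sum, ← Finset.sum_sub_distrib]
    exact Finset.sum_congr rfl fun y _ => by ring
  have h2 : ∑ y, (X y - a * Y y) * w y
      = (∑ y, X y * w y) - a * ∑ y, Y y * w y := by
    rw [Finset.mul_sum, ← Finset.sum_sub_distrib]
    exact Finset.sum_congr rfl fun y _ => by ring
  rw [h1, h2]
  ring

lemma N_symm (w f g : (Fin n → Bool) → ℝ) : N w f g = N w g f := by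
  simp only [N]
  have : ∑ y, f y * g y * w y = ∑ y, g y * f y * w y :=
    Finset.sum_congr rfl fun y _ => by ring
  rw [this]
  ring

lemma N_fst_sum (w g : (Fin n → Bool) → ℝ) (c : Fin n → ℝ)
    (e : Fin n → (Fin n → Bool) → ℝ) :
    N w (fun y => ∑ j, c j * e j y) g = ∑ j, c j * N w (e j) g := by
  simp only [N]
  have h1 : (∑ y, (∑ j, c j * e j y) * g y * w y)
      = ∑ j, c j * ∑ y, e j y * g y * w y := by
    calc ∑ y, (∑ j, c j * e j y) * g y * w y
        = ∑ y : Fin n → Bool, ∑ j, c j * (e j y * g y * w y) := by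
          refine Finset.sum_congr rfl fun y _ => ?_
          rw [Finset.sum_mul, Finset.sum_mul]
          exact Finset.sum_congr rfl fun j _ => by ring
      _ = ∑ j, ∑ y : Fin n → Bool, c j * (e j y * g y * w y) := Finset.sum_comm
      _ = ∑ j, c j * ∑ y, e j y * g y * w y := by
          exact Finset.sum_congr rfl fun j _ => (Finset.mul_sum _ _ _).symm
  have h2 : (∑ y, (∑ j, c j * e j y) * w y)
      = ∑ j, c j * ∑ y, e j y * w y := by
    calc ∑ y, (∑ j, c j * e j y) * w y
        = ∑ y : Fin n → Bool, ∑ j, c j * (e j y * w y) := by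
          refine Finset.sum_congr rfl fun y _ => ?_
          rw [Finset.sum_mul]
          exact Finset.sum_congr rfl fun j _ => by ring
      _ = ∑ j, ∑ y : Fin n → Bool, c j * (e j y * w y) := Finset.sum_comm
      _ = ∑ j, c j * ∑ y, e j y * w y := by
          exact Finset.sum_congr rfl fun j _ => (Finset.mul_sum _ _ _).symm
  rw [h1, h2, Finset.sum_mul, Finset.sum_mul, ← Finset.sum_sub_distrib]
  exact Finset.sum_congr rfl fun j _ => by ring



noncomputable def tnh (r : ℝ) : ℝ :=
  (Real.exp r - Real.exp (-r)) / (Real.exp r + Real.exp (-r))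

lemma den_pos (r : ℝ) : 0 < Real.exp r + Real.exp (-r) :=
  add_pos (Real.exp_pos _) (Real.exp_pos _)

lemma tnh_sq_le_one (r : ℝ) : tnh r ^ 2 ≤ 1 := by
  rw [tnh, div_pow, div_le_one (by positivity)]
  nlinarith [Real.exp_pos r, Real.exp_pos (-r)]

lemma hasDerivAt_tnh (r : ℝ) : HasDerivAt tnh (1 - tnh r ^ 2) r := by
  have hnum : HasDerivAt (fun r => Real.exp r - Real.exp (-r))
      (Real.exp r + Real.exp (-r)) r := by
    have h1 := Real.hasDerivAt_exp r
    have h2 : HasDerivAt (fun r : ℝ => Real.exp (-r)) (-Real.exp (-r)) r := by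
      have := (Real.hasDerivAt_exp (-r)).comp r (hasDerivAt_neg r)
      simpa [Function.comp_def] using this
    simpa using h1.fun_sub h2
  have hden : HasDerivAt (fun r => Real.exp r + Real.exp (-r))
      (Real.exp r - Real.exp (-r)) r := by
    have h1 := Real.hasDerivAt_exp r
    have h2 : HasDerivAt (fun r : ℝ => Real.exp (-r)) (-Real.exp (-r)) r := by
      have := (Real.hasDerivAt_exp (-r)).comp r (hasDerivAt_neg r)
      simpa [Function.comp_def] using this
    simpa [sub_eq_add_neg] using h1.fun_add h2
  have := hnum.div hden (ne_of_gt (den_pos r))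
  refine this.congr_deriv ?_
  rw [tnh]
  field_simp

lemma tnh_lipschitz (a b : ℝ) : |tnh a - tnh b| ≤ |a - b| := by
  have key : ∀ x : ℝ, x ∈ (Set.univ : Set ℝ) →
      HasDerivWithinAt tnh (1 - tnh x ^ 2) Set.univ x :=
    fun x _ => (hasDerivAt_tnh x).hasDerivWithinAt
  have bound : ∀ x : ℝ, x ∈ (Set.univ : Set ℝ) → ‖(1 : ℝ) - tnh x ^ 2‖ ≤ 1 := by
    intro x _
    rw [Real.norm_eq_abs, abs_le]
    constructor
    · nlinarith [tnh_sq_le_one x]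
    · nlinarith [sq_nonneg (tnh x)]
  have := Convex.norm_image_sub_le_of_norm_hasDerivWithin_le key bound convex_univ
    (Set.mem_univ b) (Set.mem_univ a)
  simpa [Real.norm_eq_abs] using this

/-- The fundamental pair identity. -/
lemma tnh_pair (r : ℝ) : (1 - tnh r) * Real.exp r = (1 + tnh r) * Real.exp (-r) := by
  rw [tnh]
  have h := ne_of_gt (den_pos r)
  field_simp
  nlinarith [Real.exp_pos r, Real.exp_pos (-r), Real.exp_ne_zero r,
    mul_pos (Real.exp_pos r) (Real.exp_pos (-r))]


def flip (j : Fin n) (y : Fin n → Bool) : Fin n → Bool := Function.update y j (!(y j))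

lemma flip_apply_self (j : Fin n) (y : Fin n → Bool) : flip j y j = !(y j) := by
  simp [flip]

lemma flip_apply_ne (j k : Fin n) (y : Fin n → Bool) (h : k ≠ j) : flip j y k = y k := by
  simp [flip, Function.update_of_ne h]

lemma flip_flip (j : Fin n) (y : Fin n → Bool) : flip j (flip j y) = y := by
  funext k
  by_cases h : k = j
  · subst h; simp [flip]
  · rw [flip_apply_ne _ _ _ h, flip_apply_ne _ _ _ h]

lemma flip_ne (j : Fin n) (y : Fin n → Bool) : flip j y ≠ y := by
  intro hc
  have := congrFun hc j
  rw [flip_apply_self] at this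
  cases hy : y j <;> rw [hy] at this <;> simp at this

lemma spin_flip_self (j : Fin n) (y : Fin n → Bool) :
    spin (flip j y) j = -spin y j := by
  cases hy : y j <;> simp [spin, flip_apply_self, hy]

/-- The linear form with the `j`-th term removed. -/
noncomputable def Sm (v : Fin n → ℝ) (j : Fin n) (y : Fin n → Bool) : ℝ :=
  S v y - v j * spin y j

lemma Sm_eq_erase (v : Fin n → ℝ) (j : Fin n) (y : Fin n → Bool) :
    Sm v j y = ∑ k ∈ univ.erase j, v k * spin y k := by
  rw [Sm, S, ← Finset.add_sum_erase _ _ (mem_univ j)]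
  ring

lemma Sm_flip (v : Fin n → ℝ) (j : Fin n) (y : Fin n → Bool) :
    Sm v j (flip j y) = Sm v j y := by
  rw [Sm_eq_erase, Sm_eq_erase]
  refine Finset.sum_congr rfl fun k hk => ?_
  have hkj : k ≠ j := (Finset.mem_erase.1 hk).1
  rw [show spin (flip j y) k = spin y k by simp [spin, flip_apply_ne j k y hkj]]

noncomputable def θf (v c : Fin n → ℝ) (j : Fin n) (y : Fin n → Bool) : ℝ :=
  v j * Sm v j y + c j

noncomputable def Af (v c : Fin n → ℝ) (j : Fin n) (y : Fin n → Bool) : ℝ :=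
  (1/2) * (Sm v j y)^2 + (1/2) * (v j)^2 + Sm c j y

lemma spin_sq (j : Fin n) (y : Fin n → Bool) : spin y j ^ 2 = 1 := by
  cases hy : y j <;> simp [spin, hy]

lemma W_decomp (v c : Fin n → ℝ) (j : Fin n) (y : Fin n → Bool) :
    W v c y = Real.exp (Af v c j y + spin y j * θf v c j y) := by
  rw [W]
  congr 1
  rw [Af, θf, Sm, Sm]
  linear_combination ((v j)^2/2) * spin_sq j y

lemma θf_flip (v c : Fin n → ℝ) (j : Fin n) (y : Fin n → Bool) :
    θf v c j (flip j y) = θf v c j y := by rw [θf, θf, Sm_flip]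

lemma Af_flip (v c : Fin n → ℝ) (j : Fin n) (y : Fin n → Bool) :
    Af v c j (flip j y) = Af v c j y := by rw [Af, Af, Sm_flip, Sm_flip]

/-- Conditional-expectation (tanh) substitution identity. -/
lemma sum_spin_mul_eq (v c : Fin n → ℝ) (j : Fin n) (f : (Fin n → Bool) → ℝ)
    (hf : ∀ y, f (flip j y) = f y) :
    ∑ y : Fin n → Bool, spin y j * f y * W v c y
      = ∑ y : Fin n → Bool, tnh (θf v c j y) * f y * W v c y := by
  have key : ∑ y : Fin n → Bool,
      (spin y j - tnh (θf v c j y)) * f y * W v c y = 0 := by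
    refine Finset.sum_involution (fun y _ => flip j y) ?_ ?_ (fun y _ => mem_univ _)
      (fun y _ => flip_flip j y)
    · intro y _
      rw [hf, θf_flip]
      rw [W_decomp v c j y, W_decomp v c j (flip j y), Af_flip, θf_flip,
        spin_flip_self]
      set A := Af v c j y
      set θ := θf v c j y
      set σ := spin y j
      have hexp1 : Real.exp (A + σ * θ) = Real.exp A * Real.exp (σ * θ) := Real.exp_add _ _
      have hexp2 : Real.exp (A + -σ * θ) = Real.exp A * Real.exp (-(σ * θ)) := by
        rw [← Real.exp_add]; ring_nf
      rw [hexp1, hexp2]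
      have hpair := tnh_pair θ
      cases hy : y j
      · have hσ : σ = -1 := by simp [σ, spin, hy]
        rw [hσ]
        simp only [neg_one_mul, one_mul, neg_neg]
        linear_combination (f y * Real.exp A) * hpair
      · have hσ : σ = 1 := by simp [σ, spin, hy]
        rw [hσ]
        simp only [neg_one_mul, one_mul, neg_neg]
        linear_combination (f y * Real.exp A) * hpair
    · intro y _ _
      exact flip_ne j y
  have expand : ∑ y : Fin n → Bool, (spin y j - tnh (θf v c j y)) * f y * W v c y
      = (∑ y : Fin n → Bool, spin y j * f y * W v c y)
        - ∑ y : Fin n → Bool, tnh (θf v c j y) * f y * W v c y := by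
    rw [← Finset.sum_sub_distrib]
    exact Finset.sum_congr rfl fun y _ => by ring
  linarith [key, expand.symm.trans key]


end StmtAux
namespace StmtAux
variable {n : ℕ}
open Real Finset

lemma sum_spin_sq_w (v c : Fin n → ℝ) (j : Fin n) :
    ∑ y : Fin n → Bool, spin y j * spin y j * W v c y = ∑ y : Fin n → Bool, W v c y := by
  refine Finset.sum_congr rfl fun y _ => ?_
  have h2 : spin y j * spin y j = 1 := by cases hy : y j <;> simp [spin, hy]
  rw [h2, one_mul]

lemma N_spin_spin_le (v c : Fin n → ℝ) (j : Fin n) :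
    N (W v c) (fun y => spin y j) (fun y => spin y j)
      ≤ (∑ y : Fin n → Bool, W v c y)^2 := by
  rw [N]
  rw [sum_spin_sq_w v c j]
  nlinarith [sq_nonneg (∑ y : Fin n → Bool, spin y j * W v c y)]

/-- Key variance bound at numerator level. -/
lemma N_S_bound (v c : Fin n → ℝ) (hv : ∀ k, 0 ≤ v k) :
    N (W v c) (S v) (S v)
      ≤ (∑ k, v k ^ 2) * (N (W v c) (S v) (S v) + (∑ y : Fin n → Bool, W v c y)^2) := by
  have hw : ∀ y, 0 ≤ W v c y := fun y => (W_pos v c y).le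
  have hSmeq : ∀ j : Fin n, Sm v j = fun y => S v y - v j * spin y j := by
    intro j; funext y; rw [Sm]
  have key : ∀ j, N (W v c) (fun y => spin y j) (S v)
      ≤ v j * (N (W v c) (S v) (S v) + (∑ y : Fin n → Bool, W v c y)^2) := by
    intro j
    have hσ2 := N_spin_spin_le v c j
    have hσ0 := N_self_nonneg (W v c) hw (fun y => spin y j)
    have hS0 := N_self_nonneg (W v c) hw (S v)
    -- (b)
    have hb : N (W v c) (fun y => spin y j) (S v)
        = N (W v c) (fun y => spin y j) (Sm v j)
          + v j * N (W v c) (fun y => spin y j) (fun y => spin y j) := by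
      have h := N_sub_smul (W v c) (fun y => spin y j) (S v) (fun y => spin y j) (v j)
      rw [← hSmeq j] at h
      rw [h]; ring
    -- (c)
    have hc : N (W v c) (fun y => spin y j) (Sm v j)
        = N (W v c) (fun y => tnh (θf v c j y)) (Sm v j) := by
      simp only [N]
      have i1 : ∑ y : Fin n → Bool, spin y j * Sm v j y * W v c y
          = ∑ y : Fin n → Bool, tnh (θf v c j y) * Sm v j y * W v c y :=
        sum_spin_mul_eq v c j (Sm v j) (fun y => Sm_flip v j y)
      have i2 : ∑ y : Fin n → Bool, spin y j * W v c y
          = ∑ y : Fin n → Bool, tnh (θf v c j y) * W v c y := by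
        have := sum_spin_mul_eq v c j (fun _ => 1) (fun y => rfl)
        simpa using this
      rw [i1, i2]
    -- (d)
    have hd : N (W v c) (fun y => tnh (θf v c j y)) (Sm v j)
        ≤ v j * N (W v c) (Sm v j) (Sm v j) := by
      refine N_le_of_pointwise (W v c) _ _ (v j) hw fun y y' => ?_
      have h1 : |tnh (θf v c j y) - tnh (θf v c j y')| ≤ |θf v c j y - θf v c j y'| :=
        tnh_lipschitz _ _
      have h2 : θf v c j y - θf v c j y' = v j * (Sm v j y - Sm v j y') := by
        rw [θf, θf]; ring
      calc (tnh (θf v c j y) - tnh (θf v c j y')) * (Sm v j y - Sm v j y')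
          ≤ |(tnh (θf v c j y) - tnh (θf v c j y')) * (Sm v j y - Sm v j y')| :=
            le_abs_self _
        _ = |tnh (θf v c j y) - tnh (θf v c j y')| * |Sm v j y - Sm v j y'| := abs_mul _ _
        _ ≤ |θf v c j y - θf v c j y'| * |Sm v j y - Sm v j y'| :=
            mul_le_mul_of_nonneg_right h1 (abs_nonneg _)
        _ = (v j * |Sm v j y - Sm v j y'|) * |Sm v j y - Sm v j y'| := by
            rw [h2, abs_mul, abs_of_nonneg (hv j)]
        _ = v j * ((Sm v j y - Sm v j y') * (Sm v j y - Sm v j y')) := by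
            rw [mul_assoc, abs_mul_abs_self]
    -- (e)
    have he : N (W v c) (Sm v j) (Sm v j)
        = N (W v c) (S v) (S v)
          - 2 * v j * N (W v c) (fun y => spin y j) (S v)
          + v j^2 * N (W v c) (fun y => spin y j) (fun y => spin y j) := by
      have e1 : N (W v c) (Sm v j) (Sm v j)
          = N (W v c) (Sm v j) (S v) - v j * N (W v c) (Sm v j) (fun y => spin y j) := by
        have h := N_sub_smul (W v c) (Sm v j) (S v) (fun y => spin y j) (v j)
        rw [← hSmeq j] at h
        exact h
      have e2 : N (W v c) (Sm v j) (S v) = N (W v c) (S v) (S v)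
          - v j * N (W v c) (fun y => spin y j) (S v) := by
        rw [N_symm]
        have h := N_sub_smul (W v c) (S v) (S v) (fun y => spin y j) (v j)
        rw [← hSmeq j] at h
        rw [h, N_symm (W v c) (S v) (fun y => spin y j)]
      have e3 : N (W v c) (Sm v j) (fun y => spin y j)
          = N (W v c) (fun y => spin y j) (S v)
            - v j * N (W v c) (fun y => spin y j) (fun y => spin y j) := by
        rw [N_symm]
        have h := N_sub_smul (W v c) (fun y => spin y j) (S v) (fun y => spin y j) (v j)
        rw [← hSmeq j] at h
        exact h
      rw [e1, e2, e3]; ring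
    have main : (1 + 2 * v j^2) * N (W v c) (fun y => spin y j) (S v)
        ≤ v j * N (W v c) (S v) (S v)
          + v j * (1 + v j^2) * (∑ y : Fin n → Bool, W v c y)^2 := by
      have step : N (W v c) (fun y => spin y j) (S v)
          ≤ v j * N (W v c) (Sm v j) (Sm v j)
            + v j * N (W v c) (fun y => spin y j) (fun y => spin y j) := by
        rw [hb, hc]
        have := mul_le_mul_of_nonneg_left hσ2 (hv j)
        linarith [hd]
      rw [he] at step
      have h5 := mul_le_mul_of_nonneg_left hσ2 (hv j)
      have h6 := mul_le_mul_of_nonneg_left hσ2 (mul_nonneg (hv j)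
        (mul_nonneg (hv j) (hv j)))
      nlinarith [step, h5, h6]
    nlinarith [main, mul_nonneg (mul_nonneg (hv j) (mul_nonneg (hv j) (hv j))) hS0,
      mul_nonneg (mul_nonneg (hv j) (mul_nonneg (hv j) (hv j)))
        (sq_nonneg (∑ y : Fin n → Bool, W v c y))]
  have hsum : N (W v c) (S v) (S v)
      = ∑ j, v j * N (W v c) (fun y => spin y j) (S v) := by
    have hS : S v = fun y => ∑ j, v j * spin y j := by funext y; rw [S]
    calc N (W v c) (S v) (S v)
        = N (W v c) (fun y => ∑ j, v j * spin y j) (S v) := by rw [← hS]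
      _ = ∑ j, v j * N (W v c) (fun y => spin y j) (S v) :=
          N_fst_sum (W v c) (S v) v (fun j y => spin y j)
  calc N (W v c) (S v) (S v)
      = ∑ j, v j * N (W v c) (fun y => spin y j) (S v) := hsum
    _ ≤ ∑ j, v j * (v j * (N (W v c) (S v) (S v) + (∑ y : Fin n → Bool, W v c y)^2)) :=
        Finset.sum_le_sum fun j _ => mul_le_mul_of_nonneg_left (key j) (hv j)
    _ = (∑ k, v k ^ 2) * (N (W v c) (S v) (S v) + (∑ y : Fin n → Bool, W v c y)^2) := by
        rw [Finset.sum_mul]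
        exact Finset.sum_congr rfl fun j _ => by ring

end StmtAux
namespace StmtAux
variable {n : ℕ}
open Real Finset

noncomputable def Zt (v g : Fin n → ℝ) (t : ℝ) : ℝ := ∑ y : Fin n → Bool, W v (g + t • v) y

noncomputable def Mt (v g : Fin n → ℝ) (t : ℝ) : ℝ :=
  ∑ y : Fin n → Bool, S v y * W v (g + t • v) y

noncomputable def Qt (v g : Fin n → ℝ) (t : ℝ) : ℝ :=
  ∑ y : Fin n → Bool, S v y * S v y * W v (g + t • v) y

noncomputable def φt (v g : Fin n → ℝ) (t : ℝ) : ℝ := Mt v g t / Zt v g t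

lemma W_t_eq (v g : Fin n → ℝ) (t : ℝ) (y : Fin n → Bool) :
    W v (g + t • v) y
      = Real.exp (((1/2) * (S v y)^2 + S g y) + t * S v y) := by
  rw [W, S_smul_add]
  ring_nf

lemma hasDerivAt_Zt (v g : Fin n → ℝ) (t : ℝ) :
    HasDerivAt (Zt v g) (Mt v g t) t := by
  have : ∀ y ∈ (univ : Finset (Fin n → Bool)),
      HasDerivAt (fun t => W v (g + t • v) y) (S v y * W v (g + t • v) y) t := by
    intro y _
    have h1 : HasDerivAt (fun t : ℝ => ((1/2) * (S v y)^2 + S g y) + t * S v y)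
        (S v y) t := (hasDerivAt_mul_const (S v y)).const_add _
    have h2 := h1.exp
    simp_rw [W_t_eq]
    convert h2 using 1
    ring
  have hsum := HasDerivAt.fun_sum this
  have : Zt v g = fun t => ∑ y : Fin n → Bool, W v (g + t • v) y := rfl
  rw [this]
  exact hsum

lemma hasDerivAt_Mt (v g : Fin n → ℝ) (t : ℝ) :
    HasDerivAt (Mt v g) (Qt v g t) t := by
  have : ∀ y ∈ (univ : Finset (Fin n → Bool)),
      HasDerivAt (fun t => S v y * W v (g + t • v) y)
        (S v y * S v y * W v (g + t • v) y) t := by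
    intro y _
    have h1 : HasDerivAt (fun t : ℝ => ((1/2) * (S v y)^2 + S g y) + t * S v y)
        (S v y) t := (hasDerivAt_mul_const (S v y)).const_add _
    have h2 := (h1.exp).const_mul (S v y)
    simp_rw [W_t_eq]
    refine h2.congr_deriv ?_
    ring
  have hsum := HasDerivAt.fun_sum this
  have : Mt v g = fun t => ∑ y : Fin n → Bool, S v y * W v (g + t • v) y := rfl
  rw [this]
  exact hsum

lemma Zt_pos (v g : Fin n → ℝ) (t : ℝ) : 0 < Zt v g t := Z_pos v _

lemma hasDerivAt_φt (v g : Fin n → ℝ) (t : ℝ) :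
    HasDerivAt (φt v g)
      (N (W v (g + t • v)) (S v) (S v) / (Zt v g t)^2) t := by
  have h := (hasDerivAt_Mt v g t).div (hasDerivAt_Zt v g t) (ne_of_gt (Zt_pos v g t))
  have : φt v g = fun t => Mt v g t / Zt v g t := rfl
  rw [this]
  exact h

lemma φt_deriv_bound (v g : Fin n → ℝ) (hv : ∀ k, 0 ≤ v k)
    (hV : ∑ k, v k ^ 2 < 1) (t : ℝ) :
    ‖N (W v (g + t • v)) (S v) (S v) / (Zt v g t)^2‖
      ≤ (∑ k, v k ^ 2) / (1 - ∑ k, v k ^ 2) := by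
  have hZ := Zt_pos v g t
  have hN0 : 0 ≤ N (W v (g + t • v)) (S v) (S v) :=
    N_self_nonneg _ (fun y => (W_pos _ _ y).le) _
  have hNb := N_S_bound v (g + t • v) hv
  have hZeq : (∑ y : Fin n → Bool, W v (g + t • v) y) = Zt v g t := rfl
  rw [hZeq] at hNb
  rw [Real.norm_eq_abs, abs_of_nonneg (by positivity)]
  rw [div_le_div_iff₀ (by positivity) (by linarith)]
  nlinarith [hNb]

lemma φt_diff_le (v g : Fin n → ℝ) (hv : ∀ k, 0 ≤ v k)
    (hV : ∑ k, v k ^ 2 < 1) (a b : ℝ) :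
    |φt v g b - φt v g a| ≤ (∑ k, v k ^ 2) / (1 - ∑ k, v k ^ 2) * |b - a| := by
  have key : ∀ x : ℝ, x ∈ (Set.univ : Set ℝ) →
      HasDerivWithinAt (φt v g)
        (N (W v (g + x • v)) (S v) (S v) / (Zt v g x)^2) Set.univ x :=
    fun x _ => (hasDerivAt_φt v g x).hasDerivWithinAt
  have bound : ∀ x : ℝ, x ∈ (Set.univ : Set ℝ) →
      ‖N (W v (g + x • v)) (S v) (S v) / (Zt v g x)^2‖
        ≤ (∑ k, v k ^ 2) / (1 - ∑ k, v k ^ 2) :=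
    fun x _ => φt_deriv_bound v g hv hV x
  have := Convex.norm_image_sub_le_of_norm_hasDerivWithin_le key bound convex_univ
    (Set.mem_univ a) (Set.mem_univ b)
  simpa [Real.norm_eq_abs] using this

end StmtAux
namespace StmtAux
variable {n : ℕ}
open Real Finset

noncomputable def χ (j : Fin n) (y : Fin n → Bool) : ℝ := if y j then 1 else 0

lemma χ_nonneg (j : Fin n) : (0 : (Fin n → Bool) → ℝ) ≤ χ j := by
  intro y; by_cases h : y j <;> simp [χ, h]

lemma χ_monotone (j : Fin n) : Monotone (χ j) := by
  intro y y' hyy'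
  have hj := hyy' j
  by_cases h : y j
  · have h' : y' j = true := by
      cases hy' : y' j
      · rw [h, hy'] at hj; exact absurd hj (by simp)
      · rfl
    simp [χ, h, h']
  · by_cases h' : y' j <;> simp [χ, h, h']

noncomputable def Nj (v g : Fin n → ℝ) (j : Fin n) (t : ℝ) : ℝ :=
  ∑ y : Fin n → Bool, χ j y * W v (g + t • v) y

/-- Monotonicity in the external field via Holley's inequality. -/
lemma Nj_mono (v g : Fin n → ℝ) (hv : ∀ k, 0 ≤ v k) (j : Fin n) {t t' : ℝ} (ht : t ≤ t') :
    Nj v g j t * Zt v g t' ≤ Nj v g j t' * Zt v g t := by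
  have hh := holley (fun y => W v (g + t • v) y * Zt v g t')
    (fun y => W v (g + t' • v) y * Zt v g t) (χ j)
    ?_ ?_ ?_ (χ_monotone j) ?_ ?_
  · have e1 : ∑ y : Fin n → Bool, χ j y * (W v (g + t • v) y * Zt v g t')
        = Nj v g j t * Zt v g t' := by
      rw [Nj, Finset.sum_mul]
      exact Finset.sum_congr rfl fun y _ => by ring
    have e2 : ∑ y : Fin n → Bool, χ j y * (W v (g + t' • v) y * Zt v g t)
        = Nj v g j t' * Zt v g t := by
      rw [Nj, Finset.sum_mul]
      exact Finset.sum_congr rfl fun y _ => by ring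
    rw [← e1, ← e2]
    exact hh
  · exact χ_nonneg j
  · intro y; exact mul_nonneg (W_pos _ _ y).le (Zt_pos v g t').le
  · intro y; exact mul_nonneg (W_pos _ _ y).le (Zt_pos v g t).le
  · rw [← Finset.sum_mul, ← Finset.sum_mul]
    have : (∑ y : Fin n → Bool, W v (g + t • v) y) = Zt v g t := rfl
    rw [this]
    have : (∑ y : Fin n → Bool, W v (g + t' • v) y) = Zt v g t' := rfl
    rw [this]
    ring
  · intro a b
    have hsm := supermod v g hv ht a b
    have hZZ : 0 ≤ Zt v g t' * Zt v g t := mul_nonneg (Zt_pos v g t').le (Zt_pos v g t).le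
    calc W v (g + t • v) a * Zt v g t' * (W v (g + t' • v) b * Zt v g t)
        = (W v (g + t • v) a * W v (g + t' • v) b) * (Zt v g t' * Zt v g t) := by ring
      _ ≤ (W v (g + t • v) (a ⊓ b) * W v (g + t' • v) (a ⊔ b)) * (Zt v g t' * Zt v g t) :=
          mul_le_mul_of_nonneg_right hsm hZZ
      _ = W v (g + t • v) (a ⊓ b) * Zt v g t' * (W v (g + t' • v) (a ⊔ b) * Zt v g t) := by ring

end StmtAux
namespace StmtAux
variable {n : ℕ}
open Real Finset

noncomputable def εB (b : Bool) : ℝ := if b then 1 else -1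

noncomputable def zeroAt (c : Fin n → ℝ) (i : Fin n) : Fin n → ℝ :=
  fun k => if k = i then 0 else c k

lemma S_zeroAt_erase (c : Fin n → ℝ) (i : Fin n) (x : Fin n → Bool) :
    S (zeroAt c i) x = ∑ k ∈ univ.erase i, c k * spin x k := by
  rw [S, ← Finset.add_sum_erase _ _ (mem_univ i)]
  have h0 : zeroAt c i i = 0 := by simp [zeroAt]
  rw [h0]
  rw [zero_mul, zero_add]
  refine Finset.sum_congr rfl fun k hk => ?_
  have : zeroAt c i k = c k := by simp [zeroAt, (Finset.mem_erase.1 hk).1]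
  rw [this]

lemma sum_split (c : Fin n → ℝ) (i : Fin n) (x : Fin n → Bool) :
    ∑ k, c k * spin x k = c i * spin x i + S (zeroAt c i) x := by
  rw [S_zeroAt_erase]
  exact (Finset.add_sum_erase _ _ (mem_univ i)).symm

lemma S_flip_inv (c : Fin n → ℝ) (i : Fin n) (hci : c i = 0) (y : Fin n → Bool) :
    S c (flip i y) = S c y := by
  have h1 : ∀ z, S c z = Sm c i z := by
    intro z; rw [Sm, hci]; ring
  rw [h1, h1, Sm_flip]

lemma half_sum (i : Fin n) (F : (Fin n → Bool) → ℝ) (hF : ∀ y, F (flip i y) = F y)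
    (b : Bool) :
    ∑ x ∈ univ.filter (fun x : Fin n → Bool => x i = b), F x
      = (1/2) * ∑ y : Fin n → Bool, F y := by
  have hsplit := Finset.sum_filter_add_sum_filter_not univ (fun x : Fin n → Bool => x i = b) F
  have hbij : ∑ x ∈ univ.filter (fun x : Fin n → Bool => x i = b), F x
      = ∑ x ∈ univ.filter (fun x : Fin n → Bool => ¬ x i = b), F x := by
    refine Finset.sum_nbij' (flip i) (flip i) ?_ ?_ ?_ ?_ ?_
    · intro a ha
      have hab : a i = b := (Finset.mem_filter.1 ha).2
      simp only [Finset.mem_filter, Finset.mem_univ, true_and, flip_apply_self, hab]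
      cases b <;> simp
    · intro a ha
      have hab : ¬ a i = b := (Finset.mem_filter.1 ha).2
      simp only [Finset.mem_filter, Finset.mem_univ, true_and, flip_apply_self]
      cases hb : a i
      · cases b
        · exact absurd hb hab
        · simp
      · cases b
        · simp
        · exact absurd hb hab
    · intro a _; exact flip_flip i a
    · intro a _; exact flip_flip i a
    · intro a _; exact (hF a).symm
  linarith [hsplit, hbij]

section Reduction
variable (u h : Fin n → ℝ) (i : Fin n)

/-- For configurations with `x i = b`, the Ising weight factorizes. -/
lemma W_factor (b : Bool) (x : Fin n → Bool) (hx : x i = b) :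
    W u h x = Real.exp ((1/2) * (u i)^2 + εB b * h i)
      * W (zeroAt u i) (zeroAt h i + (εB b * u i) • zeroAt u i) x := by
  have hσ : spin x i = εB b := by simp [spin, hx, εB]
  have hσ2 : εB b ^ 2 = 1 := by cases b <;> simp [εB]
  have eq1 : S u x = u i * εB b + S (zeroAt u i) x := by
    have := sum_split u i x
    rw [hσ] at this
    rw [S]; rw [this]
  have eq2 : S h x = h i * εB b + S (zeroAt h i) x := by
    have := sum_split h i x
    rw [hσ] at this
    rw [S]; rw [this]
  rw [W, W_t_eq, ← Real.exp_add]
  congr 1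
  rw [eq1, eq2]
  linear_combination ((u i)^2/2) * hσ2

lemma isingRk1_eq_W : isingRk1 u h = fun x => W u h x / ∑ y : Fin n → Bool, W u h y := rfl

lemma condProb_reduce (j : Fin n) (hji : j ≠ i) (b : Bool) :
    condProb u h i j b
      = Nj (zeroAt u i) (zeroAt h i) j (εB b * u i)
        / Zt (zeroAt u i) (zeroAt h i) (εB b * u i) := by
  set vv := zeroAt u i with hvv
  set gg := zeroAt h i with hgg
  set t := εB b * u i with htdef
  set cb := Real.exp ((1/2) * (u i)^2 + εB b * h i) with hcb
  have hcb_pos : 0 < cb := Real.exp_pos _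
  have hWt_flip : ∀ y, W vv (gg + t • vv) (flip i y) = W vv (gg + t • vv) y := by
    intro y
    rw [W, W]
    rw [S_flip_inv vv i (by simp [hvv, zeroAt]) y,
      S_flip_inv (gg + t • vv) i (by simp [hvv, hgg, zeroAt]) y]
  have hZ0 : (0:ℝ) < ∑ y : Fin n → Bool, W u h y := Z_pos u h
  -- step 1: cancel the global normalization
  have step1 : condProb u h i j b
      = (∑ x ∈ univ.filter (fun x : Fin n → Bool => x j = true ∧ x i = b), W u h x)
        / (∑ x ∈ univ.filter (fun x : Fin n → Bool => x i = b), W u h x) := by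
    rw [condProb, isingRk1_eq_W u h]
    rw [← Finset.sum_div, ← Finset.sum_div]
    rw [div_div_div_cancel_right₀ (ne_of_gt hZ0)]
  -- step 2: numerator as χ-weighted sum over the section
  have step2 : ∑ x ∈ univ.filter (fun x : Fin n → Bool => x j = true ∧ x i = b), W u h x
      = ∑ x ∈ univ.filter (fun x : Fin n → Bool => x i = b), χ j x * W u h x := by
    rw [Finset.sum_filter, Finset.sum_filter]
    refine Finset.sum_congr rfl fun y _ => ?_
    by_cases h1 : y j = true <;> by_cases h2 : y i = b <;> simp [χ, h1, h2]
  -- step 3: factor cb on the section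
  have step3 : ∀ (f : (Fin n → Bool) → ℝ),
      ∑ x ∈ univ.filter (fun x : Fin n → Bool => x i = b), f x * W u h x
        = cb * ∑ x ∈ univ.filter (fun x : Fin n → Bool => x i = b),
            f x * W vv (gg + t • vv) x := by
    intro f
    rw [Finset.mul_sum]
    refine Finset.sum_congr rfl fun x hx => ?_
    have hxib : x i = b := (Finset.mem_filter.1 hx).2
    rw [W_factor u h i b x hxib]
    ring
  have step3' : ∑ x ∈ univ.filter (fun x : Fin n → Bool => x i = b), W u h x
      = cb * ∑ x ∈ univ.filter (fun x : Fin n → Bool => x i = b),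
          W vv (gg + t • vv) x := by
    have := step3 (fun _ => 1)
    simpa using this
  -- step 4: un-restrict using flip invariance
  have step4num : ∑ x ∈ univ.filter (fun x : Fin n → Bool => x i = b),
      χ j x * W vv (gg + t • vv) x = (1/2) * Nj vv gg j t := by
    rw [Nj]
    refine half_sum i _ (fun y => ?_) b
    rw [hWt_flip y]
    have : χ j (flip i y) = χ j y := by
      rw [χ, χ, flip_apply_ne i j y hji]
    rw [this]
  have step4den : ∑ x ∈ univ.filter (fun x : Fin n → Bool => x i = b),
      W vv (gg + t • vv) x = (1/2) * Zt vv gg t := by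
    rw [Zt]
    exact half_sum i _ (fun y => hWt_flip y) b
  rw [step1, step2, step3 (χ j), step3', step4num, step4den]
  rw [mul_comm cb ((1/2) * Nj vv gg j t), mul_comm cb ((1/2) * Zt vv gg t)]
  rw [mul_div_mul_right _ _ (ne_of_gt hcb_pos)]
  rw [mul_div_mul_left _ _ (by norm_num : (1/2 : ℝ) ≠ 0)]

end Reduction
end StmtAux
namespace StmtAux
variable {n : ℕ}
open Real Finset

lemma sum_Nj (u h : Fin n → ℝ) (i : Fin n) (t : ℝ) :
    ∑ j ∈ univ.filter (fun j => j ≠ i), u j * Nj (zeroAt u i) (zeroAt h i) j t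
      = (1/2) * ((∑ j ∈ univ.filter (fun j => j ≠ i), u j)
          * Zt (zeroAt u i) (zeroAt h i) t + Mt (zeroAt u i) (zeroAt h i) t) := by
  have hfe : univ.filter (fun j : Fin n => j ≠ i) = univ.erase i :=
    Finset.filter_ne' univ i
  rw [hfe]
  simp only [Nj, Finset.mul_sum]
  rw [Finset.sum_comm]
  have inner : ∀ y : Fin n → Bool,
      ∑ j ∈ univ.erase i, u j * (χ j y * W (zeroAt u i) (zeroAt h i + t • zeroAt u i) y)
        = ((1/2) * ((∑ j ∈ univ.erase i, u j) + S (zeroAt u i) y))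
            * W (zeroAt u i) (zeroAt h i + t • zeroAt u i) y := by
    intro y
    have e1 : ∑ j ∈ univ.erase i, u j * (χ j y * W (zeroAt u i) (zeroAt h i + t • zeroAt u i) y)
        = (∑ j ∈ univ.erase i, u j * χ j y) * W (zeroAt u i) (zeroAt h i + t • zeroAt u i) y := by
      rw [Finset.sum_mul]
      exact Finset.sum_congr rfl fun j _ => by ring
    rw [e1]
    congr 1
    have hpt : ∀ j ∈ univ.erase i, u j * χ j y = (1/2) * (u j + u j * spin y j) := by
      intro j _
      by_cases hy : y j <;> simp [χ, spin, hy] <;> ring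
    rw [Finset.sum_congr rfl hpt]
    rw [← Finset.mul_sum, Finset.sum_add_distrib, S_zeroAt_erase u i y]
  rw [Finset.sum_congr rfl fun y _ => inner y]
  have expand : ∀ y : Fin n → Bool,
      ((1/2) * ((∑ j ∈ univ.erase i, u j) + S (zeroAt u i) y))
          * W (zeroAt u i) (zeroAt h i + t • zeroAt u i) y
        = (1/2) * (∑ j ∈ univ.erase i, u j)
            * W (zeroAt u i) (zeroAt h i + t • zeroAt u i) y
          + (1/2) * (S (zeroAt u i) y * W (zeroAt u i) (zeroAt h i + t • zeroAt u i) y) := by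
    intro y; ring
  rw [Finset.sum_congr rfl fun y _ => expand y, Finset.sum_add_distrib,
    ← Finset.mul_sum, ← Finset.mul_sum]
  have hZ : (∑ y : Fin n → Bool, W (zeroAt u i) (zeroAt h i + t • zeroAt u i) y)
      = Zt (zeroAt u i) (zeroAt h i) t := rfl
  have hM : (∑ y : Fin n → Bool, S (zeroAt u i) y
      * W (zeroAt u i) (zeroAt h i + t • zeroAt u i) y)
      = Mt (zeroAt u i) (zeroAt h i) t := rfl
  rw [hZ, hM]
  ring

end StmtAux

theorem stmt_18 (n : ℕ) (u : Fin n → ℝ) (hu0 : ∀ i, 0 < u i)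
    (hu : Real.sqrt (∑ i, u i ^ 2) ≤ 1) (h : Fin n → ℝ) (i : Fin n) :
    ∑ j ∈ Finset.univ.filter (fun j => j ≠ i),
        |condProb u h i j true - condProb u h i j false| * u j ≤
      (1 / (1 - (∑ j, u j ^ 2) + u i ^ 2)) * u i * ((∑ j, u j ^ 2) - u i ^ 2) := by
  classical
  open StmtAux in
  have hvnn : ∀ k, 0 ≤ zeroAt u i k := by
    intro k; by_cases hk : k = i <;> simp [StmtAux.zeroAt, hk] <;> exact (hu0 k).le
  set vv := StmtAux.zeroAt u i with hvv
  set gg := StmtAux.zeroAt h i with hgg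
  set V := ∑ k, vv k ^ 2 with hVdef
  -- identification of V
  have hVeq : V = (∑ k, u k ^ 2) - u i ^ 2 := by
    have h1 : ∀ k, vv k ^ 2 = if k = i then 0 else u k ^ 2 := by
      intro k; by_cases hk : k = i <;> simp [hvv, StmtAux.zeroAt, hk]
    have h2 : V = ∑ k ∈ Finset.univ.erase i, u k ^ 2 := by
      rw [hVdef, ← Finset.add_sum_erase _ _ (Finset.mem_univ i), h1 i]
      rw [if_pos rfl, zero_add]
      refine Finset.sum_congr rfl fun k hk => ?_
      rw [h1 k, if_neg (Finset.mem_erase.1 hk).1]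
    have h3 : ∑ k, u k ^ 2 = u i ^ 2 + ∑ k ∈ Finset.univ.erase i, u k ^ 2 :=
      (Finset.add_sum_erase _ _ (Finset.mem_univ i)).symm
    rw [h2]; linarith
  have hsq : (∑ k, u k ^ 2) ≤ 1 := by
    have h0 : (0:ℝ) ≤ ∑ k, u k ^ 2 := Finset.sum_nonneg fun k _ => sq_nonneg _
    nlinarith [Real.sq_sqrt h0, Real.sqrt_nonneg (∑ k, u k ^ 2), hu]
  have hV0 : 0 ≤ V := Finset.sum_nonneg fun k _ => sq_nonneg _
  have hV1 : V < 1 := by nlinarith [hu0 i, hVeq, hsq]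
  have huipos := hu0 i
  -- monotonicity of conditional probabilities
  have ht1 : StmtAux.εB true * u i = u i := by simp [StmtAux.εB]
  have ht2 : StmtAux.εB false * u i = -u i := by simp [StmtAux.εB]
  have key : ∀ j ∈ Finset.univ.filter (fun j => j ≠ i),
      condProb u h i j true - condProb u h i j false
        = StmtAux.Nj vv gg j (u i) / StmtAux.Zt vv gg (u i)
          - StmtAux.Nj vv gg j (-u i) / StmtAux.Zt vv gg (-u i) := by
    intro j hj
    have hji : j ≠ i := (Finset.mem_filter.1 hj).2
    rw [StmtAux.condProb_reduce u h i j hji true, StmtAux.condProb_reduce u h i j hji false,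
      ht1, ht2]
  have hmono : ∀ j : Fin n,
      StmtAux.Nj vv gg j (-u i) / StmtAux.Zt vv gg (-u i)
        ≤ StmtAux.Nj vv gg j (u i) / StmtAux.Zt vv gg (u i) := by
    intro j
    have hNm := StmtAux.Nj_mono vv gg hvnn j (show -u i ≤ u i by linarith)
    rw [div_le_div_iff₀ (StmtAux.Zt_pos vv gg (-u i)) (StmtAux.Zt_pos vv gg (u i))]
    linarith [hNm]
  -- rewrite the LHS
  have lhs_eq : ∑ j ∈ Finset.univ.filter (fun j => j ≠ i),
      |condProb u h i j true - condProb u h i j false| * u j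
      = (∑ j ∈ Finset.univ.filter (fun j => j ≠ i),
          u j * StmtAux.Nj vv gg j (u i)) / StmtAux.Zt vv gg (u i)
        - (∑ j ∈ Finset.univ.filter (fun j => j ≠ i),
          u j * StmtAux.Nj vv gg j (-u i)) / StmtAux.Zt vv gg (-u i) := by
    rw [Finset.sum_div, Finset.sum_div, ← Finset.sum_sub_distrib]
    refine Finset.sum_congr rfl fun j hj => ?_
    rw [key j hj, abs_of_nonneg (by linarith [hmono j])]
    rw [div_sub_div _ _ (ne_of_gt (StmtAux.Zt_pos vv gg (u i)))
      (ne_of_gt (StmtAux.Zt_pos vv gg (-u i))), div_sub_div _ _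
      (ne_of_gt (StmtAux.Zt_pos vv gg (u i))) (ne_of_gt (StmtAux.Zt_pos vv gg (-u i)))]
    rw [div_mul_eq_mul_div]
    congr 1
    ring
  have hsN1 := StmtAux.sum_Nj u h i (u i)
  have hsN2 := StmtAux.sum_Nj u h i (-u i)
  rw [← hvv, ← hgg] at hsN1 hsN2
  rw [lhs_eq, hsN1, hsN2]
  set K := ∑ j ∈ Finset.univ.filter (fun j : Fin n => j ≠ i), u j with hK
  have hZp : 0 < StmtAux.Zt vv gg (u i) := StmtAux.Zt_pos vv gg (u i)
  have hZm : 0 < StmtAux.Zt vv gg (-u i) := StmtAux.Zt_pos vv gg (-u i)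
  have simp1 : ∀ t : ℝ, 0 < StmtAux.Zt vv gg t →
      (1/2) * (K * StmtAux.Zt vv gg t + StmtAux.Mt vv gg t) / StmtAux.Zt vv gg t
        = (1/2) * K + (1/2) * StmtAux.φt vv gg t := by
    intro t hZ
    rw [StmtAux.φt]
    field_simp
  rw [simp1 (u i) hZp, simp1 (-u i) hZm]
  have hdiff : (1/2) * K + (1/2) * StmtAux.φt vv gg (u i)
      - ((1/2) * K + (1/2) * StmtAux.φt vv gg (-u i))
      = (1/2) * (StmtAux.φt vv gg (u i) - StmtAux.φt vv gg (-u i)) := by ring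
  rw [hdiff]
  have hMVT := StmtAux.φt_diff_le vv gg hvnn (by rw [← hVdef]; exact hV1) (-u i) (u i)
  rw [← hVdef] at hMVT
  have habs : |u i - -u i| = 2 * u i := by
    rw [abs_of_pos (by linarith)]; ring
  rw [habs] at hMVT
  have hb1 : StmtAux.φt vv gg (u i) - StmtAux.φt vv gg (-u i)
      ≤ V / (1 - V) * (2 * u i) := le_trans (le_abs_self _) hMVT
  have hrhs : (1 / (1 - (∑ j, u j ^ 2) + u i ^ 2)) * u i * ((∑ j, u j ^ 2) - u i ^ 2)
      = (1/2) * (V / (1 - V) * (2 * u i)) := by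
    rw [hVeq]
    ring
  rw [hrhs]
  linarith [hb1]
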